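/- Distance formula via a corner cube: let G be a finite median graph, v a corner of G with unique cube C = C(v), u the vertex of C opposite to v, and N(u) the set of neighbors of u in C (nonempty). Then for any vertex x ∉ {v}, d(x,u) = max{ d(x,w) : w ∈ N(u) } − 1. -/

import Mathlib

/-- The metric interval between `u` and `v` in a graph `G`. -/
def interval {V : Type*} (G : SimpleGraph V) (u v : V) : Set V :=
  {w | G.dist u w + G.dist w v = G.dist u v}

/-- A graph is median if every triple of vertices has a unique median. -/
def MedianGraph {V : Type*} (G : SimpleGraph V) : Prop :=
  ∀ x y z : V, ∃! m : V,
    m ∈ interval G x y ∧ m ∈ interval G y z ∧ m ∈ interval G z x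

/-- The hypercube graph `Q_n`. -/
def cubeGraph (n : ℕ) : SimpleGraph (Fin n → Bool) :=
  SimpleGraph.fromRel (fun u v => (Finset.univ.filter fun i => u i ≠ v i).card = 1)

/-!
If no neighbour of `u` in the cube moves away from `x`, then, median graphs being bipartite, all
of them move towards `x`. The downward quasi-median property together with the absence of
`K_{2,3}` propagates this through the cube level by level: `d(x,c) + d(c,u) = d(x,u)` for every
vertex `c` of the cube. A neighbour of `v` on a geodesic to `x ≠ v` lies in the cube, one level
closer to `u` than `v`, yet one step closer to `x`, which contradicts this formula.
-/

open SimpleGraph Function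

theorem SimpleGraph.Connected.exists_adj_dist_add_one_eq {V : Type*} {G : SimpleGraph V}
    (hconn : G.Connected) {x v : V} (hxv : x ≠ v) :
    ∃ w, G.Adj v w ∧ G.dist x w + 1 = G.dist x v := by
  obtain ⟨p, hp⟩ := hconn.exists_walk_length_eq_dist v x
  cases p with
  | nil => exact absurd rfl hxv
  | @cons _ w _ hvw q =>
    refine ⟨w, hvw, ?_⟩
    have hq : G.dist w x ≤ q.length := dist_le q
    have htri : G.dist v x ≤ G.dist v w + G.dist w x := hconn.dist_triangle
    rw [Walk.length_cons] at hp
    rw [dist_eq_one_iff_adj.mpr hvw] at htri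
    rw [dist_comm, dist_comm (u := x)]
    omega

theorem mem_interval_iff {V : Type*} {G : SimpleGraph V} {a b m : V} :
    m ∈ interval G a b ↔ G.dist a m + G.dist m b = G.dist a b := Iff.rfl

namespace MedianGraph

variable {V : Type*} {G : SimpleGraph V}

theorem dist_ne_of_adj (hmed : MedianGraph G) (hconn : G.Connected) {a b : V}
    (hab : G.Adj a b) (x : V) : G.dist x a ≠ G.dist x b := by
  intro h
  obtain ⟨m, ⟨hxa, hab', hbx⟩, -⟩ := hmed x a b
  simp only [mem_interval_iff] at hxa hab' hbx
  -- the median `m` lies on the edge `ab`, so it is `a` or `b`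
  rw [dist_eq_one_iff_adj.mpr hab] at hab'
  have hba : G.dist b a = 1 := dist_eq_one_iff_adj.mpr hab.symm
  rcases Nat.add_eq_one_iff.mp hab' with ⟨hma, -⟩ | ⟨-, hmb⟩
  · obtain rfl : a = m := hconn.dist_eq_zero_iff.mp hma
    have : G.dist a x = G.dist x a := dist_comm
    have : G.dist b x = G.dist x b := dist_comm
    omega
  · obtain rfl : m = b := hconn.dist_eq_zero_iff.mp hmb
    omega

theorem dist_add_one_eq_or (hmed : MedianGraph G) (hconn : G.Connected) {a b : V}
    (hab : G.Adj a b) (x : V) :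
    G.dist x a + 1 = G.dist x b ∨ G.dist x b + 1 = G.dist x a := by
  have := hmed.dist_ne_of_adj hconn hab x
  rcases hab.diff_dist_adj (u := x) with h | h | h <;> omega

theorem mem_interval_of_adj (hmed : MedianGraph G) (hconn : G.Connected) {p m q : V}
    (hpm : G.Adj p m) (hmq : G.Adj m q) (hpq : p ≠ q) : m ∈ interval G p q := by
  have hle : G.dist p q ≤ G.dist p m + G.dist m q := hconn.dist_triangle
  have hpos : 0 < G.dist p q := hconn.pos_dist_of_ne hpq
  have hnadj : G.dist p q ≠ 1 := fun h =>
    hmed.dist_ne_of_adj hconn (dist_eq_one_iff_adj.mp h) m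
      (by rw [dist_comm, dist_eq_one_iff_adj.mpr hpm, dist_eq_one_iff_adj.mpr hmq])
  change G.dist p m + G.dist m q = G.dist p q
  rw [dist_eq_one_iff_adj.mpr hpm, dist_eq_one_iff_adj.mpr hmq] at hle ⊢
  omega

theorem eq_of_three_common_neighbors (hmed : MedianGraph G) (hconn : G.Connected)
    {a b p q r : V} (hap : G.Adj a p) (haq : G.Adj a q) (har : G.Adj a r)
    (hbp : G.Adj b p) (hbq : G.Adj b q) (hbr : G.Adj b r)
    (hpq : p ≠ q) (hqr : q ≠ r) (hrp : r ≠ p) : a = b := by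
  have hmedian : ∀ m, G.Adj m p → G.Adj m q → G.Adj m r →
      m ∈ interval G p q ∧ m ∈ interval G q r ∧ m ∈ interval G r p := fun m hp hq hr =>
    ⟨hmed.mem_interval_of_adj hconn hp.symm hq hpq,
      hmed.mem_interval_of_adj hconn hq.symm hr hqr,
      hmed.mem_interval_of_adj hconn hr.symm hp hrp⟩
  exact (hmed p q r).unique (hmedian a hap haq har) (hmedian b hbp hbq hbr)

theorem exists_adj_adj_dist_add_one (hmed : MedianGraph G) (hconn : G.Connected)
    {x p c₁ c₂ : V} (h₁ : G.Adj c₁ p) (h₂ : G.Adj c₂ p) (hne : c₁ ≠ c₂)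
    (hd₁ : G.dist x c₁ + 1 = G.dist x p) (hd₂ : G.dist x c₂ + 1 = G.dist x p) :
    ∃ m, G.Adj c₁ m ∧ G.Adj c₂ m ∧ G.dist x m + 1 = G.dist x c₁ := by
  have hc : G.dist c₁ c₂ = 2 := by
    have := hmed.mem_interval_of_adj hconn h₁ h₂.symm hne
    rwa [mem_interval_iff, dist_eq_one_iff_adj.mpr h₁,
      dist_eq_one_iff_adj.mpr h₂.symm, eq_comm] at this
  -- the median of `x`, `c₁`, `c₂` is equidistant from `c₁` and `c₂`, hence adjacent to both
  obtain ⟨m, ⟨hx₁, h₁₂, h₂x⟩, -⟩ := hmed x c₁ c₂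
  simp only [mem_interval_iff] at hx₁ h₁₂ h₂x
  have : G.dist m c₁ = G.dist c₁ m := dist_comm
  have : G.dist c₂ m = G.dist m c₂ := dist_comm
  have : G.dist m x = G.dist x m := dist_comm
  have : G.dist c₂ x = G.dist x c₂ := dist_comm
  have hm₁ : G.dist c₁ m = 1 := by omega
  have hm₂ : G.dist c₂ m = 1 := by omega
  exact ⟨m, dist_eq_one_iff_adj.mp hm₁, dist_eq_one_iff_adj.mp hm₂, by omega⟩

theorem dist_add_one_eq_of_square (hmed : MedianGraph G) (hconn : G.Connected)
    {x a b c d : V} (hab : G.Adj a b) (hac : G.Adj a c) (hbd : G.Adj b d) (hcd : G.Adj c d)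
    (hbc : b ≠ c) (had : a ≠ d)
    (hb : G.dist x b + 1 = G.dist x d) (hc : G.dist x c + 1 = G.dist x d) :
    G.dist x a + 1 = G.dist x b := by
  obtain ⟨m, hbm, hcm, hm⟩ := hmed.exists_adj_adj_dist_add_one hconn hbd hcd hbc hb hc
  refine (hmed.dist_add_one_eq_or hconn hab x).resolve_right fun hba => ?_
  -- otherwise `a`, `d` and `m` are three common neighbours of `b` and `c`
  have hdm : d ≠ m := by rintro rfl; omega
  have hma : m ≠ a := by rintro rfl; omega
  exact hbc (hmed.eq_of_three_common_neighbors hconn hab.symm hbd hbm hac.symm hcd hcm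
    had hdm hma)

end MedianGraph

section Hamming

variable {ι β : Type*} [Fintype ι] [DecidableEq ι] [DecidableEq β]

theorem hammingDist_update_add_one {a b : ι → β} {i : ι} (hi : a i ≠ b i) :
    hammingDist (update a i (b i)) b + 1 = hammingDist a b := by
  have hfilter : Finset.univ.filter (fun j => update a i (b i) j ≠ b j) =
      (Finset.univ.filter fun j => a j ≠ b j).erase i := by
    ext j
    rcases eq_or_ne j i with rfl | hj <;> simp [*]
  rw [hammingDist, hammingDist, hfilter, Finset.card_erase_add_one (by simpa using hi)]

theorem hammingDist_update_self {a : ι → β} {i : ι} {s : β} (hs : a i ≠ s) :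
    hammingDist a (update a i s) = 1 := by
  have h := hammingDist_update_add_one (a := update a i s) (b := a) (i := i)
    (by simpa using hs.symm)
  rwa [update_idem, update_eq_self, hammingDist_self, zero_add, eq_comm, hammingDist_comm] at h

end Hamming

theorem hammingDist_add_hammingDist_of_eq_card {ι : Type*} [Fintype ι] {a t : ι → Bool}
    (hat : hammingDist a t = Fintype.card ι) (c : ι → Bool) :
    hammingDist a c + hammingDist c t = Fintype.card ι := by
  have hne : ∀ i, a i ≠ t i := by
    rw [hammingDist, Finset.card_eq_iff_eq_univ, Finset.filter_eq_self] at hat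
    exact fun i => hat i (Finset.mem_univ i)
  have hcompl : Finset.univ.filter (fun i => c i ≠ t i) =
      Finset.univ.filter (fun i => ¬a i ≠ c i) := by
    ext i
    have := hne i
    revert this
    simp only [Finset.mem_filter, Finset.mem_univ, true_and]
    cases a i <;> cases c i <;> cases t i <;> decide
  rw [hammingDist, hammingDist, hcompl, Finset.card_filter_add_card_filter_not, Finset.card_univ]

theorem cubeGraph_adj_iff {n : ℕ} {a b : Fin n → Bool} :
    (cubeGraph n).Adj a b ↔ hammingDist a b = 1 := by
  rw [cubeGraph, fromRel_adj]
  change a ≠ b ∧ (hammingDist a b = 1 ∨ hammingDist b a = 1) ↔ _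
  rw [hammingDist_comm b a, or_self, and_iff_right_iff_imp]
  rintro h rfl
  simp at h

theorem cubeGraph_adj_update {n : ℕ} {a : Fin n → Bool} {i : Fin n} {s : Bool}
    (hs : a i ≠ s) :
    (cubeGraph n).Adj a (update a i s) :=
  cubeGraph_adj_iff.mpr (hammingDist_update_self hs)

theorem dist_le_hammingDist {V : Type*} {G : SimpleGraph V} (hconn : G.Connected) {n : ℕ}
    (f : cubeGraph n →g G) (a b : Fin n → Bool) : G.dist (f a) (f b) ≤ hammingDist a b := by
  induction hk : hammingDist a b generalizing a with
  | zero => rw [hammingDist_eq_zero.mp hk, dist_self]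
  | succ k ih =>
    obtain ⟨i, hi⟩ := ne_iff.mp (hammingDist_ne_zero.mp (by omega : hammingDist a b ≠ 0))
    have hadj : G.Adj (f a) (f (update a i (b i))) := f.map_adj (cubeGraph_adj_update hi)
    have hk' := hammingDist_update_add_one hi
    calc G.dist (f a) (f b)
        ≤ G.dist (f a) (f (update a i (b i))) + G.dist (f (update a i (b i))) (f b) :=
          hconn.dist_triangle
      _ ≤ 1 + k := by
          rw [dist_eq_one_iff_adj.mpr hadj]
          gcongr
          exact ih _ (by omega)
      _ = k + 1 := add_comm 1 k

theorem cubeGraph_exists_square {n : ℕ} {c t : Fin n → Bool} (h : 2 ≤ hammingDist c t) :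
    ∃ c₁ c₂ c₁₂, (cubeGraph n).Adj c c₁ ∧ (cubeGraph n).Adj c c₂ ∧
      (cubeGraph n).Adj c₁ c₁₂ ∧ (cubeGraph n).Adj c₂ c₁₂ ∧ c₁ ≠ c₂ ∧
      hammingDist c₁ t + 1 = hammingDist c t ∧ hammingDist c₂ t + 1 = hammingDist c t ∧
      hammingDist c₁₂ t + 2 = hammingDist c t := by
  obtain ⟨i, hi, j, hj, hij⟩ := Finset.one_lt_card.mp (by rwa [← hammingDist] :
    1 < (Finset.univ.filter fun i => c i ≠ t i).card)
  replace hi : c i ≠ t i := (Finset.mem_filter.mp hi).2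
  replace hj : c j ≠ t j := (Finset.mem_filter.mp hj).2
  have hc₁j : update c i (t i) j ≠ t j := by rwa [update_of_ne hij.symm]
  have hc₂i : update c j (t j) i ≠ t i := by rwa [update_of_ne hij]
  refine ⟨update c i (t i), update c j (t j), update (update c i (t i)) j (t j),
    cubeGraph_adj_update hi, cubeGraph_adj_update hj, cubeGraph_adj_update hc₁j, ?_,
    fun h => hc₂i (h ▸ update_self i (t i) c), hammingDist_update_add_one hi,
    hammingDist_update_add_one hj, ?_⟩
  · rw [update_comm hij]
    exact cubeGraph_adj_update hc₂i
  · have := hammingDist_update_add_one hi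
    have := hammingDist_update_add_one hc₁j
    omega

namespace MedianGraph

variable {V : Type*} {G : SimpleGraph V} {n : ℕ}

theorem dist_add_hammingDist_eq (hmed : MedianGraph G) (hconn : G.Connected)
    (f : cubeGraph n ↪g G) {x : V} {t : Fin n → Bool}
    (hnbr : ∀ b, hammingDist b t = 1 → G.dist x (f b) + 1 = G.dist x (f t))
    (c : Fin n → Bool) : G.dist x (f c) + hammingDist c t = G.dist x (f t) := by
  induction hk : hammingDist c t using Nat.strong_induction_on generalizing c with
  | _ k ih =>
  obtain _ | _ | k := k
  · rw [hammingDist_eq_zero.mp hk, add_zero]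
  · exact hnbr c hk
  obtain ⟨c₁, c₂, c₁₂, h₁, h₂, h₁₁₂, h₂₁₂, hne, hd₁, hd₂, hd₁₂⟩ :=
    cubeGraph_exists_square (t := t) (c := c) (by omega)
  have e₁ := ih _ (by omega) c₁ rfl
  have e₂ := ih _ (by omega) c₂ rfl
  have e₁₂ := ih _ (by omega) c₁₂ rfl
  have hcc₁₂ : c ≠ c₁₂ := by rintro rfl; omega
  have := hmed.dist_add_one_eq_of_square hconn (x := x) (f.map_adj_iff.mpr h₁)
    (f.map_adj_iff.mpr h₂) (f.map_adj_iff.mpr h₁₁₂) (f.map_adj_iff.mpr h₂₁₂)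
    (f.injective.ne hne) (f.injective.ne hcc₁₂) (by omega) (by omega)
  omega

theorem exists_hammingDist_eq_one_dist_add_one (hmed : MedianGraph G) (hconn : G.Connected)
    (f : cubeGraph n ↪g G) {a t : Fin n → Bool} (hat : hammingDist a t = n)
    (hcorner : ∀ w, G.Adj (f a) w → w ∈ Set.range f) {x : V} (hx : x ≠ f a) :
    ∃ b, hammingDist b t = 1 ∧ G.dist x (f t) + 1 = G.dist x (f b) := by
  by_contra! hfar
  have hnbr : ∀ b, hammingDist b t = 1 → G.dist x (f b) + 1 = G.dist x (f t) := fun b hb =>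
    have htb : G.Adj (f t) (f b) :=
      f.map_adj_iff.mpr (cubeGraph_adj_iff.mpr ((hammingDist_comm t b).trans hb))
    (hmed.dist_add_one_eq_or hconn htb x).resolve_left (hfar b hb)
  obtain ⟨w, haw, hw⟩ := hconn.exists_adj_dist_add_one_eq hx
  obtain ⟨b, rfl⟩ := hcorner w haw
  have hab : hammingDist a b = 1 := cubeGraph_adj_iff.mp (f.map_adj_iff.mp haw)
  have hsplit := hammingDist_add_hammingDist_of_eq_card (by rwa [Fintype.card_fin]) b
  rw [Fintype.card_fin] at hsplit
  have := hmed.dist_add_hammingDist_eq hconn f hnbr a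
  have := hmed.dist_add_hammingDist_eq hconn f hnbr b
  omega

end MedianGraph

theorem median_corner_cube_distance_general {V : Type*} (G : SimpleGraph V)
    (hconn : G.Connected) (hmed : MedianGraph G)
    (v : V) (C : Set V) (n : ℕ)
    (hiso : Nonempty (G.induce C ≃g cubeGraph n))
    (hv : v ∈ C) (hnbrs : ∀ u : V, G.Adj v u → u ∈ C)
    (u : V) (hu : u ∈ C) (hopp : G.dist v u = n)
    (x : V) (hx : x ≠ v) :
    ∃ w : V, (w ∈ C ∧ G.Adj u w) ∧ G.dist x u + 1 = G.dist x w ∧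
      ∀ w' : V, (w' ∈ C ∧ G.Adj u w') → G.dist x w' ≤ G.dist x w := by
  obtain ⟨φ⟩ := hiso
  let f : cubeGraph n ↪g G := (Embedding.induce C).comp φ.symm.toEmbedding
  have hf : ∀ y : C, f (φ y) = y := fun y => by simp [f]
  have hat : hammingDist (φ ⟨v, hv⟩) (φ ⟨u, hu⟩) = n := le_antisymm
    (by simpa using hammingDist_le_card_fintype (x := φ ⟨v, hv⟩) (y := φ ⟨u, hu⟩))
    (by simpa [hf, hopp] using dist_le_hammingDist hconn f.toHom (φ ⟨v, hv⟩) (φ ⟨u, hu⟩))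
  obtain ⟨b, hb, hfar⟩ := hmed.exists_hammingDist_eq_one_dist_add_one hconn f hat
    (fun w hw => ⟨φ ⟨w, hnbrs w (by simpa [hf] using hw)⟩, hf _⟩) (by simpa [hf] using hx)
  replace hfar : G.dist x u + 1 = G.dist x (f b) := by simpa [hf] using hfar
  refine ⟨f b, ⟨(φ.symm b).2, ?_⟩, hfar, fun w' ⟨_, huw'⟩ => ?_⟩
  · simpa [hf] using f.map_adj_iff.mpr (cubeGraph_adj_iff.mpr ((hammingDist_comm _ b).trans hb))
  · have htri : G.dist x w' ≤ G.dist x u + G.dist u w' := hconn.dist_triangle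
    rw [dist_eq_one_iff_adj.mpr huw'] at htri
    omega

/-- Distance formula via a corner cube: if `v` is a corner of a finite median graph `G`
with corner cube `C` of dimension `n ≥ 1`, `u` the vertex of `C` opposite to `v`, and
`N(u)` the neighbors of `u` in `C`, then for any `x ≠ v`,
`d(x,u) = max {d(x,w) : w ∈ N(u)} - 1`. -/
theorem median_corner_cube_distance {V : Type*} [Fintype V] (G : SimpleGraph V)
    (hconn : G.Connected) (hmed : MedianGraph G)
    (v : V) (C : Set V) (n : ℕ) (hn : 1 ≤ n)
    (hiso : Nonempty (G.induce C ≃g cubeGraph n))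
    (hv : v ∈ C) (hnbrs : ∀ u : V, G.Adj v u → u ∈ C)
    (u : V) (hu : u ∈ C) (hopp : G.dist v u = n)
    (x : V) (hx : x ≠ v) :
    ∃ w : V, (w ∈ C ∧ G.Adj u w) ∧ G.dist x u + 1 = G.dist x w ∧
      ∀ w' : V, (w' ∈ C ∧ G.Adj u w') → G.dist x w' ≤ G.dist x w :=
  median_corner_cube_distance_general G hconn hmed v C n hiso hv hnbrs u hu hopp x hx
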